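/- With samples bounded in [0,1], the blinkered value of information Λ_α^b of taking N additional samples of the leading arm α satisfies Λ_α^b ≤ (N·x̄_β^{n_β}/(N + n_α)) · Pr(x̄_α^{n_α+N} ≤ x̄_β^{n_β}) ≤ (N·x̄_β^{n_β}/n_α) · Pr(x̄_α^{n_α+N} ≤ x̄_β^{n_β}). -/

import Mathlib

open MeasureTheory

/-! The new samples are nonnegative and `xβ ≤ a`, so `xβ - Y ≤ N xβ / (N + n)` everywhere. Hence
the gain `max (xβ - Y) 0` is at most this constant on the event `Y ≤ xβ` and vanishes off it;
integrating gives the first bound, and `n ≤ N + n` the second. -/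

lemma sub_updated_mean_le {n N a b s : ℝ} (hn : 0 < n) (hN : 0 ≤ N) (hs : 0 ≤ s)
    (hba : b ≤ a) : b - (n * a + N * s) / (n + N) ≤ N * b / (N + n) := by
  rw [add_comm N n, sub_le_iff_le_add, ← add_div, le_div_iff₀ (by positivity)]
  nlinarith [mul_le_mul_of_nonneg_left hba hn.le, mul_nonneg hN hs]

lemma integral_le_mul_measureReal_of_le_indicator {Ω : Type*} [MeasurableSpace Ω]
    (μ : Measure Ω) [IsFiniteMeasure μ] {f : Ω → ℝ} {s : Set Ω} {c : ℝ} (hc : 0 ≤ c)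
    (hf₀ : 0 ≤ f) (hf : f ≤ s.indicator fun _ => c) : ∫ ω, f ω ∂μ ≤ c * μ.real s := by
  -- `s` need not be measurable: pass to a measurable hull of the same measure.
  have hs : f ≤ (toMeasurable μ s).indicator fun _ => c := fun ω ↦
    (hf ω).trans (Set.indicator_le_indicator_of_subset (subset_toMeasurable μ s) (fun _ ↦ hc) ω)
  calc ∫ ω, f ω ∂μ ≤ ∫ ω, (toMeasurable μ s).indicator (fun _ => c) ω ∂μ :=
        integral_mono_of_nonneg (.of_forall hf₀)
          ((integrable_const c).indicator (measurableSet_toMeasurable μ s)) (.of_forall hs)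
    _ = c * μ.real s := by
        rw [integral_indicator_const _ (measurableSet_toMeasurable μ s), smul_eq_mul,
          mul_comm, measureReal_def, measureReal_def, measure_toMeasurable]

/-- `a`, `xβ` are the current sample means of `α`, `β`; `S` is the mean of the `N` new samples
of `α` and `Y` the updated mean `x̄_α^{n+N}`. -/
theorem blinkered_voi_bound_leading_general
    {Ω : Type*} [MeasurableSpace Ω] (ℙ : Measure Ω) [IsProbabilityMeasure ℙ]
    (n N a xβ : ℝ) (hn : 0 < n) (hN : 0 < N)
    (h0 : 0 ≤ xβ) (hβα : xβ ≤ a)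
    (S : Ω → ℝ) (hS : ∀ ω, 0 ≤ S ω ∧ S ω ≤ 1)
    (Y : Ω → ℝ) (hY : ∀ ω, Y ω = (n * a + N * S ω) / (n + N)) :
    (∫ ω, max (xβ - Y ω) 0 ∂ℙ) ≤
      N * xβ / (N + n) * (ℙ {ω | Y ω ≤ xβ}).toReal ∧
    N * xβ / (N + n) * (ℙ {ω | Y ω ≤ xβ}).toReal ≤
      N * xβ / n * (ℙ {ω | Y ω ≤ xβ}).toReal := by
  have hc : 0 ≤ N * xβ / (N + n) := by positivity
  have hgain : (fun ω ↦ max (xβ - Y ω) 0) ≤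
      {ω | Y ω ≤ xβ}.indicator fun _ => N * xβ / (N + n) := fun ω ↦ by
    simp only [Set.indicator_apply, Set.mem_ofPred_eq]
    split_ifs with hω
    · exact max_le (hY ω ▸ sub_updated_mean_le hn hN.le (hS ω).1 hβα) hc
    · exact max_le (by linarith [not_le.mp hω]) le_rfl
  refine ⟨integral_le_mul_measureReal_of_le_indicator ℙ hc (fun ω ↦ le_max_right _ _) hgain, ?_⟩
  gcongr
  linarith

/-- blinkered VOI bound for the leading arm `α`.  Here `a = x̄_α^{n_α}` is the
leading sample mean, `xβ = x̄_β^{n_β} ≤ a` the second best, `S ω ∈ [0,1]` the mean of the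
`N` new samples of arm `α`, and `Y ω = x̄_α^{n_α+N}`.  The blinkered VOI
`Λ_α^b = E[max (xβ - Y) 0]`. -/
theorem blinkered_voi_bound_leading
    {Ω : Type*} [MeasurableSpace Ω] (ℙ : Measure Ω) [IsProbabilityMeasure ℙ]
    (n N a xβ : ℝ) (hn : 0 < n) (hN : 0 < N)
    (h0 : 0 ≤ xβ) (hβα : xβ ≤ a)
    (S : Ω → ℝ) (hmeas : Measurable S) (hS : ∀ ω, 0 ≤ S ω ∧ S ω ≤ 1)
    (Y : Ω → ℝ) (hY : ∀ ω, Y ω = (n * a + N * S ω) / (n + N)) :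
    (∫ ω, max (xβ - Y ω) 0 ∂ℙ) ≤
      N * xβ / (N + n) * (ℙ {ω | Y ω ≤ xβ}).toReal ∧
    N * xβ / (N + n) * (ℙ {ω | Y ω ≤ xβ}).toReal ≤
      N * xβ / n * (ℙ {ω | Y ω ≤ xβ}).toReal :=
  blinkered_voi_bound_leading_general ℙ n N a xβ hn hN h0 hβα S hS Y hY
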